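/- Let F be a field, f_1,...,f_L, α_1,...,α_N pairwise distinct elements of F with L + (X+T) = N − E and E < N, and β_1,...,β_N nonzero. Let QCSA be the N×(N−E) matrix whose (n,ℓ) entry is β_n/(f_ℓ − α_n) for ℓ ∈ [L] and (n, L+j) entry is β_n α_n^{j−1} for j ∈ [X+T]. Then the column span of QCSA is an MDS code: its dimension is N−E and every nonzero codeword has Hamming weight at least E+1. -/

import Mathlib

/-!
Applied to `x = (u, v)`, row `n` of the matrix gives `β n * r (α n)` with
`r a = ∑ ℓ, u ℓ / (f ℓ - a) + ∑ j, v j * a ^ j`. Clearing denominators, `r a * ∏ ℓ, (a - f ℓ)`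
is the value at `a` of a polynomial of degree `< L + X + T = N - E`, which is nonzero for `x ≠ 0`
(evaluate it at a pole `f ℓ`, or read off its polynomial part when `u = 0`). So the codeword of a
nonzero `x` has fewer than `N - E` zero coordinates: this gives both injectivity, hence rank
`N - E`, and weight at least `E + 1`.
-/

open Polynomial Finset Lagrange Matrix

theorem Matrix.rank_eq_card_of_injective_mulVec {R m n : Type*} [CommRing R]
    [StrongRankCondition R] [Fintype n] {A : Matrix m n R} (hA : Function.Injective A.mulVec) :
    A.rank = Fintype.card n := by
  rw [Matrix.rank, LinearMap.finrank_range_of_inj hA, Module.finrank_fintype_fun_eq_card]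

section CauchyVandermonde

variable {F ι : Type*} [Field F] {L K : ℕ}

def cauchyVandermonde (f : Fin L → F) (α : ι → F) : Matrix ι (Fin L ⊕ Fin K) F :=
  Matrix.of fun n => Sum.elim (fun ℓ => (f ℓ - α n)⁻¹) (fun j => α n ^ (j : ℕ))

variable [DecidableEq F] (f : Fin L → F) (x : Fin L ⊕ Fin K → F)

noncomputable def cauchyVandermondeNumerator : F[X] :=
  ofFn K (fun j => x (.inr j)) * nodal univ f - ∑ ℓ, C (x (.inl ℓ)) * nodal (univ.erase ℓ) f

theorem eval_cauchyVandermondeNumerator (α : ι → F) (n : ι) (hn : ∀ ℓ, f ℓ ≠ α n) :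
    (cauchyVandermondeNumerator f x).eval (α n) =
      (cauchyVandermonde f α *ᵥ x) n * (nodal univ f).eval (α n) := by
  have hnode : ∀ ℓ, (f ℓ - α n)⁻¹ * (nodal univ f).eval (α n) =
      -(nodal (univ.erase ℓ) f).eval (α n) := by
    intro ℓ
    rw [nodal_eq_mul_nodal_erase (mem_univ ℓ), eval_mul, ← mul_assoc, eval_sub, eval_X, eval_C,
      ← neg_sub, inv_neg, neg_mul, inv_mul_cancel₀ (sub_ne_zero.2 (hn ℓ).symm), neg_one_mul]
  simp only [cauchyVandermondeNumerator, mulVec, dotProduct, cauchyVandermonde, of_apply,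
    Fintype.sum_sum_type, Sum.elim_inl, Sum.elim_inr, ofFn_eq_sum_monomial,
    eval_sub, eval_mul, eval_finsetSum, eval_monomial, eval_C, add_mul, sum_mul]
  rw [sub_eq_add_neg, add_comm, ← sum_neg_distrib]
  congr 1 <;> refine sum_congr rfl fun i _ => ?_
  · rw [mul_right_comm, hnode, neg_mul, mul_comm]
  · ring

theorem degree_cauchyVandermondeNumerator_lt :
    (cauchyVandermondeNumerator f x).degree < ↑(L + K) := by
  refine (degree_sub_le _ _).trans_lt (max_lt ?_ ?_)
  · rw [degree_mul, degree_nodal, card_univ, Fintype.card_fin, Nat.cast_add,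
      add_comm (L : WithBot ℕ)]
    exact WithBot.add_lt_add_right (WithBot.natCast_ne_bot L) (ofFn_degree_lt _)
  · rw [← mem_degreeLT]
    refine Submodule.sum_mem _ fun ℓ _ => ?_
    rw [← smul_eq_C_mul]
    refine Submodule.smul_mem _ _ (mem_degreeLT.2 ?_)
    rw [degree_nodal]
    exact_mod_cast (card_erase_lt_of_mem (mem_univ ℓ)).trans_le (by simp)

theorem cauchyVandermondeNumerator_ne_zero (hf : Function.Injective f) (hx : x ≠ 0) :
    cauchyVandermondeNumerator f x ≠ 0 := by
  by_cases hu : ∃ ℓ, x (.inl ℓ) ≠ 0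
  · obtain ⟨ℓ, hℓ⟩ := hu
    intro h0
    have heval := congrArg (eval (f ℓ)) h0
    rw [cauchyVandermondeNumerator, eval_sub, eval_mul, eval_nodal_at_node (mem_univ ℓ), mul_zero,
      eval_finsetSum, sum_eq_single ℓ, eval_zero, zero_sub, neg_eq_zero, eval_mul, eval_C] at heval
    · refine mul_ne_zero hℓ (eval_nodal_not_at_node fun i hi => ?_) heval
      exact hf.ne (mem_erase.1 hi).1.symm
    · intro i _ hi
      rw [eval_mul, eval_nodal_at_node (mem_erase.2 ⟨Ne.symm hi, mem_univ ℓ⟩), mul_zero]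
    · simp
  · push Not at hu
    have hv : (fun j => x (.inr j)) ≠ 0 := by
      intro hv
      exact hx (funext (Sum.rec hu (congrFun hv)))
    simpa [cauchyVandermondeNumerator, hu, nodal_ne_zero] using (injective_ofFn K).ne hv

theorem card_filter_cauchyVandermonde_mulVec_eq_zero_lt [Fintype ι] {α : ι → F}
    (hdist : Function.Injective (Sum.elim f α)) (hx : x ≠ 0) :
    #{n | (cauchyVandermonde f α *ᵥ x) n = 0} < L + K := by
  by_contra! hcard
  have hdeg : (cauchyVandermondeNumerator f x).degree < #{n | (cauchyVandermonde f α *ᵥ x) n = 0} :=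
    (degree_cauchyVandermondeNumerator_lt f x).trans_le (by exact_mod_cast hcard)
  refine cauchyVandermondeNumerator_ne_zero f x (hdist.comp Sum.inl_injective) hx
    (eq_zero_of_degree_lt_of_eval_index_eq_zero (v := α) _ (hdist.comp Sum.inr_injective).injOn
      hdeg fun n hn => ?_)
  rw [eval_cauchyVandermondeNumerator f x α n fun ℓ => hdist.ne Sum.inl_ne_inr,
    (mem_filter.1 hn).2, zero_mul]

end CauchyVandermonde

theorem stmt_14_general (F : Type*) [Field F] [DecidableEq F] (N L X T E : ℕ)
    (hsum : L + X + T + E = N)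
    (f : Fin L → F) (α : Fin N → F)
    (hdist : Function.Injective (Sum.elim f α : Fin L ⊕ Fin N → F))
    (β : Fin N → F) (hβ : ∀ n, β n ≠ 0)
    (QCSA : Matrix (Fin N) (Fin L ⊕ Fin (X + T)) F)
    (hQ : ∀ n : Fin N, (∀ ℓ : Fin L, QCSA n (Sum.inl ℓ) = β n * (f ℓ - α n)⁻¹) ∧
          (∀ j : Fin (X + T), QCSA n (Sum.inr j) = β n * (α n) ^ (j : ℕ))) :
    QCSA.rank = N - E ∧
    (∀ x : Fin L ⊕ Fin (X + T) → F, QCSA.mulVec x ≠ 0 →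
      E + 1 ≤ (Finset.univ.filter (fun n : Fin N => QCSA.mulVec x n ≠ 0)).card) := by
  have hQCSA : QCSA = diagonal β * cauchyVandermonde f α := by
    ext n (ℓ | j) <;> simp [cauchyVandermonde, hQ]
  have hzeros : ∀ x ≠ 0, #{n | (QCSA *ᵥ x) n = 0} < L + (X + T) := by
    intro x hx
    simpa [hQCSA, ← mulVec_mulVec, mulVec_diagonal, hβ]
      using card_filter_cauchyVandermonde_mulVec_eq_zero_lt f x hdist hx
  refine ⟨?_, fun x hx => ?_⟩
  · have hinj : Function.Injective QCSA.mulVec := by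
      refine (injective_iff_map_eq_zero QCSA.mulVecLin).2 fun x hx => ?_
      by_contra hne
      have hcard := hzeros x hne
      rw [mulVecLin_apply] at hx
      simp only [hx, Pi.zero_apply, filter_true, card_univ, Fintype.card_fin] at hcard
      omega
    rw [rank_eq_card_of_injective_mulVec hinj, Fintype.card_sum, Fintype.card_fin, Fintype.card_fin]
    omega
  · have hx0 : x ≠ 0 := by rintro rfl; exact hx (mulVec_zero _)
    have hzero := hzeros x hx0
    have hsplit := card_filter_add_card_filter_not (s := univ) fun n => (QCSA *ᵥ x) n = 0
    simp only [card_univ, Fintype.card_fin] at hsplit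
    simp only [ne_eq]
    omega

/-- The column span of the QCSA matrix is an [N, N−E, E+1] MDS code. -/
theorem stmt_14 (F : Type*) [Field F] [DecidableEq F] (N L X T E : ℕ)
    (hL : 0 < L) (hX : 0 < X) (hT : 0 < T) (hEpos : 0 < E)
    (hsum : L + X + T + E = N)
    (f : Fin L → F) (α : Fin N → F)
    (hdist : Function.Injective (Sum.elim f α : Fin L ⊕ Fin N → F))
    (β : Fin N → F) (hβ : ∀ n, β n ≠ 0)
    (QCSA : Matrix (Fin N) (Fin L ⊕ Fin (X + T)) F)
    (hQ : ∀ n : Fin N, (∀ ℓ : Fin L, QCSA n (Sum.inl ℓ) = β n * (f ℓ - α n)⁻¹) ∧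
          (∀ j : Fin (X + T), QCSA n (Sum.inr j) = β n * (α n) ^ (j : ℕ))) :
    QCSA.rank = N - E ∧
    (∀ x : Fin L ⊕ Fin (X + T) → F, QCSA.mulVec x ≠ 0 →
      E + 1 ≤ (Finset.univ.filter (fun n : Fin N => QCSA.mulVec x n ≠ 0)).card) :=
  stmt_14_general F N L X T E hsum f α hdist β hβ QCSA hQ
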